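/- Let 𝔵 be a full λ-parameter, s(*) ∈ I_𝔵, t* ∈ J_{s(*)}, and let α be an ordinal with ω ≤ α < α*_𝔵. Assume condition ⊛_{2,α}(s(*), t*) holds. Then the expanded models (M_𝔵, (s(*), e)) and (M_𝔵, (s(*), x_{t*})), obtained from M_𝔵 by adding one constant, are EF_{α,λ}-equivalent. -/

import Mathlib

open FirstOrder

universe u

namespace EFGame

variable (L : FirstOrder.Language.{0, 0})

/-- A set of pairs `f ⊆ M × N` is a partial isomorphism from `M` into `N` when it is the
graph of an injective partial function which preserves all atomic formulas (and hence
their negations). -/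
def IsPartialIso (M N : Type) [L.Structure M] [L.Structure N] (f : Set (M × N)) : Prop :=
  (∀ p ∈ f, ∀ q ∈ f, p.1 = q.1 ↔ p.2 = q.2) ∧
  (∀ (n : ℕ) (φ : L.BoundedFormula Empty n), φ.IsAtomic →
    ∀ xs : Fin n → M × N, (∀ i, xs i ∈ f) →
      (φ.Realize (fun e => e.elim) (fun i => (xs i).1) ↔
        φ.Realize (fun e => e.elim) (fun i => (xs i).2)))

/-- The isomorphism player ISO has a winning strategy in the Ehrenfeucht–Fraïssé game
`⅁^α_μ(f₀, M, N)` of length `α` where the anti-isomorphism player AIS plays pairs of sets of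
total size `< 1 + μ`.  A strategy is encoded by the ISO responses `σ β A` (the partial
isomorphism `f_{β+1}`) to a history `A` of AIS moves; it may only depend on the part of the
history already played, and all its responses must be legal moves: partial isomorphisms,
increasing with `β`, extending `f₀`, and covering the sets played by AIS.  (At a limit stage
`β` the current position is `f_β = ⋃_{γ<β} σ γ A`, which is automatically a partial
isomorphism, so ISO wins a play iff all the responses along it are legal.) -/
def WinIso (M N : Type) [L.Structure M] [L.Structure N] (f₀ : Set (M × N))
    (α : Ordinal.{0}) (μ : Cardinal.{0}) : Prop :=
  ∃ σ : Ordinal.{0} → (Ordinal.{0} → Set M × Set N) → Set (M × N),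
    (∀ β A A', (∀ γ ≤ β, A γ = A' γ) → σ β A = σ β A') ∧
    (∀ A : Ordinal.{0} → Set M × Set N,
      (∀ β, β < α → Cardinal.mk ↥(A β).1 + Cardinal.mk ↥(A β).2 < 1 + μ) →
      ∀ β, β < α →
        IsPartialIso L M N (σ β A) ∧
        f₀ ⊆ σ β A ∧
        (∀ γ, γ < β → σ γ A ⊆ σ β A) ∧
        (A β).1 ⊆ Prod.fst '' σ β A ∧
        (A β).2 ⊆ Prod.snd '' σ β A)

/-- `M` and `N` are `EF_{α,μ}`-equivalent: ISO has a winning strategy in the game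
`⅁^α_μ(M, N)` (starting from the empty partial isomorphism). -/
def EFEquiv (M N : Type) [L.Structure M] [L.Structure N]
    (α : Ordinal.{0}) (μ : Cardinal.{0}) : Prop :=
  WinIso L M N ∅ α μ

/-- The expansions `(M, c₁)` and `(N, c₂)` of `M` and `N` by one new constant are
`EF_{α,μ}`-equivalent.  The expansions are formed in the language `L[[Unit]]` obtained
from `L` by adding one constant symbol, interpreted as `c₁` in `M` and as `c₂` in `N`. -/
def EFEquivC (M N : Type) [L.Structure M] [L.Structure N] (c₁ : M) (c₂ : N)
    (α : Ordinal.{0}) (μ : Cardinal.{0}) : Prop :=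
  letI : (Language.constantsOn Unit).Structure M :=
    Language.constantsOn.structure (fun _ => c₁)
  letI : (Language.constantsOn Unit).Structure N :=
    Language.constantsOn.structure (fun _ => c₂)
  EFEquiv (L.sum (Language.constantsOn Unit)) M N α μ

end EFGame


open FirstOrder

/-- A full `λ`-parameter `𝔵` (Definition 1.1 of Shelah's paper 836). It consists of a
cardinal `λ`, an ordinal `α* ≤ λ`, a set `I` with a set `S ⊆ I × I`, sets `u_s ⊆ λ` for
`s ∈ I`, a set `J` with a map `t ↦ s_t` to `I`, a set `T ⊆ J × J` projecting into `S`,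
and, for fullness, each `t ∈ J` carries a function `g_t : u_{s_t} → α_t` (`α_t < α*`) and a
non-decreasing function `h_t : u_{s_t} → λ`, with `t` uniquely determined by
`(s_t, g_t, h_t)`.  (Functions on `u_s` are coded as total functions on ordinals, all
conditions referring only to their values on `u_s`.) -/
structure FullParam where
  lam : Cardinal.{0}
  alphaStar : Ordinal.{0}
  alphaStar_le : alphaStar ≤ lam.ord
  I : Type
  S : Set (I × I)
  u : I → Set Ordinal.{0}
  u_lt : ∀ s, ∀ γ ∈ u s, γ < lam.ord
  J : Type
  st : J → I
  T : Set (J × J)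
  T_S : ∀ p ∈ T, (st p.1, st p.2) ∈ S
  alphat : J → Ordinal.{0}
  alphat_lt : ∀ t, alphat t < alphaStar
  gt : J → Ordinal.{0} → Ordinal.{0}
  gt_lt : ∀ t, ∀ γ ∈ u (st t), gt t γ < alphat t
  ht : J → Ordinal.{0} → Ordinal.{0}
  ht_lt : ∀ t, ∀ γ ∈ u (st t), ht t γ < lam.ord
  ht_mono : ∀ t, ∀ γ₁ ∈ u (st t), ∀ γ₂ ∈ u (st t), γ₁ ≤ γ₂ → ht t γ₁ ≤ ht t γ₂
  uniq : ∀ t₁ t₂, st t₁ = st t₂ →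
    (∀ γ ∈ u (st t₁), gt t₁ γ = gt t₂ γ) →
    (∀ γ ∈ u (st t₁), ht t₁ γ = ht t₂ γ) → t₁ = t₂

namespace FullParam

variable (x : FullParam)

/-- `J_s = {t ∈ J : s_t = s}`. -/
def Js (s : x.I) : Type := {t : x.J // x.st t = s}

/-- `𝔾_s`, the free group on the generators `{x_t : t ∈ J_s}`. -/
abbrev G (s : x.I) : Type := FreeGroup (x.Js s)

/-- The universe of the model `M_𝔵`: pairs `(s, x)` with `s ∈ I`, `x ∈ 𝔾_s`. -/
abbrev M : Type := Σ s : x.I, x.G s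

/-- `𝔾_{s₁,s₂}`: the subgroup of `𝔾_{s₁} × 𝔾_{s₂}` generated by the pairs of generators
`(x_{t₁}, x_{t₂})` with `(t₁, t₂) ∈ T`, `s_{t₁} = s₁`, `s_{t₂} = s₂`. -/
def Gpair (s₁ s₂ : x.I) : Subgroup (x.G s₁ × x.G s₂) :=
  Subgroup.closure {p | ∃ (t₁ t₂ : x.J) (h₁ : x.st t₁ = s₁) (h₂ : x.st t₂ = s₂),
    (t₁, t₂) ∈ x.T ∧ p = (FreeGroup.of ⟨t₁, h₁⟩, FreeGroup.of ⟨t₂, h₂⟩)}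

/-- The union of the binary relations `Q_{s₁,s₂}` (`(s₁,s₂) ∈ S`) of `M_𝔵`:
`((s₁,x₁),(s₂,x₂)) ∈ Q` iff `(s₁,s₂) ∈ S` and `(x₁,x₂) ∈ 𝔾_{s₁,s₂}`. -/
def Q : Set (x.M × x.M) :=
  {p | (p.1.1, p.2.1) ∈ x.S ∧ (p.1.2, p.2.2) ∈ x.Gpair p.1.1 p.2.1}

open Classical in
/-- The unary function `F_{s,a}` of `M_𝔵`: `(s,y) ↦ (s, a·y)` on `P_s`, the identity off
`P_s`. -/
noncomputable def F (s : x.I) (a : x.G s) (m : x.M) : x.M :=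
  if h : m.1 = s then ⟨s, a * cast (congrArg x.G h) m.2⟩ else m

/-- An automorphism of the submodel `M_{I'}` of `M_𝔵` (coded as a bijection of `M_𝔵` which
is the identity off the universe `⋃ {P_s : s ∈ I'}` of `M_{I'}`, and on it preserves each
predicate `P_s`, each relation `Q_{s₁,s₂}`, and each function `F_{s,a}` with `s ∈ I'`). -/
structure Aut (I' : Set x.I) where
  toFun : x.M → x.M
  invFun : x.M → x.M
  left_inv : Function.LeftInverse invFun toFun
  right_inv : Function.RightInverse invFun toFun
  fix_off : ∀ m : x.M, m.1 ∉ I' → toFun m = m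
  presP : ∀ m : x.M, (toFun m).1 = m.1
  presQ : ∀ m₁ m₂ : x.M, m₁.1 ∈ I' → m₂.1 ∈ I' →
    ((m₁, m₂) ∈ x.Q ↔ (toFun m₁, toFun m₂) ∈ x.Q)
  presF : ∀ s ∈ I', ∀ (a : x.G s), ∀ m : x.M, m.1 ∈ I' →
    toFun (x.F s a m) = x.F s a (toFun m)

/-- `c̄ = ⟨c_s : s ∈ I'⟩ ∈ C_{I'}` (only the values of `c` on `I'` are relevant):
`(c_{s₁}, c_{s₂}) ∈ 𝔾_{s₁,s₂}` whenever `s₁, s₂ ∈ I'` and `(s₁,s₂) ∈ S`. -/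
def inC (I' : Set x.I) (c : ∀ s : x.I, x.G s) : Prop :=
  ∀ s₁ s₂ : x.I, s₁ ∈ I' → s₂ ∈ I' → (s₁, s₂) ∈ x.S → (c s₁, c s₂) ∈ x.Gpair s₁ s₂

open Classical in
/-- The map `f_c̄ : (s,y) ↦ (s, y·c_s)` for `s ∈ I'`, extended by the identity off the
universe of `M_{I'}`. -/
noncomputable def fc (I' : Set x.I) (c : ∀ s : x.I, x.G s) (m : x.M) : x.M :=
  if m.1 ∈ I' then ⟨m.1, m.2 * c m.1⟩ else m

/-- The vocabulary of `M_𝔵`: unary predicates `P_s` (`s ∈ I`), binary predicates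
`Q_{s₁,s₂}` (`(s₁,s₂) ∈ S`), unary function symbols `F_{s,a}` (`s ∈ I`, `a ∈ 𝔾_s`). -/
def lang : FirstOrder.Language.{0, 0} where
  Functions n := match n with
    | 1 => Σ s : x.I, x.G s
    | _ => Empty
  Relations n := match n with
    | 1 => x.I
    | 2 => ↥x.S
    | _ => Empty

/-- `M_𝔵` as a first-order structure in the vocabulary `lang 𝔵`. -/
noncomputable instance strM : x.lang.Structure x.M where
  funMap {n} f v :=
    match n, f, v with
    | 1, f, v => x.F f.1 f.2 (v 0)
    | 0, f, _ => f.elim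
    | (_ + 2), f, _ => f.elim
  RelMap {n} r v :=
    match n, r, v with
    | 1, s, v => (v 0).1 = s
    | 2, r, v => (v 0).1 = r.val.1 ∧ (v 1).1 = r.val.2 ∧ ((v 0), (v 1)) ∈ x.Q
    | 0, r, _ => r.elim
    | (_ + 3), r, _ => r.elim

end FullParam

namespace FullParam

variable (x : FullParam)

/-- An element of `𝒢_𝔵 = ⋃{𝒢_{α,β} : α < α*_𝔵, β < λ}`: a non-decreasing function
`g : β → α` with `α < α*_𝔵`, `β < λ` (coded as a total function on ordinals; only the
values on `{γ : γ < β}` are relevant). -/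
structure GFun where
  alpha : Ordinal.{0}
  beta : Ordinal.{0}
  alpha_lt : alpha < x.alphaStar
  beta_lt : beta < x.lam.ord
  g : Ordinal.{0} → Ordinal.{0}
  g_lt : ∀ γ, γ < beta → g γ < alpha
  g_mono : ∀ γ₁ γ₂, γ₁ ≤ γ₂ → γ₂ < beta → g γ₁ ≤ g γ₂

variable {x}

/-- `h_g : β → λ`, `h_g(γ) =` the least `β' ≤ β` such that `β' = β` or `g(β') > g(γ)`. -/
noncomputable def GFun.h (G : x.GFun) (γ : Ordinal.{0}) : Ordinal.{0} :=
  sInf {β' | β' ≤ G.beta ∧ (β' = G.beta ∨ G.g γ < G.g β')}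

variable (x)

/-- `t(s, g↾u_s, h↾u_s)` is well defined: there is a (necessarily unique) `t ∈ J` with
`s_t = s`, `g_t = g↾u_s` and `h_t = h↾u_s`. -/
def wellDef (s : x.I) (g h : Ordinal.{0} → Ordinal.{0}) : Prop :=
  ∃ t : x.J, x.st t = s ∧ (∀ γ ∈ x.u s, x.gt t γ = g γ) ∧ (∀ γ ∈ x.u s, x.ht t γ = h γ)

/-- `I_g = {s ∈ I : u_s ⊆ β and t(s, g↾u_s, h_g↾u_s) is well defined}`. -/
def Ig (G : x.GFun) : Set x.I :=
  {s | (∀ γ ∈ x.u s, γ < G.beta) ∧ x.wellDef s G.g G.h}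

open Classical in
/-- The family `c̄_g = ⟨c_{g,s} : s ∈ I_g⟩`, `c_{g,s} = x_{t(s, g↾u_s, h_g↾u_s)} ∈ 𝔾_s`
(extended by the identity element where `t(s, g↾u_s, h_g↾u_s)` is not well defined). -/
noncomputable def cg (G : x.GFun) (s : x.I) : x.G s :=
  if hw : x.wellDef s G.g G.h then FreeGroup.of ⟨hw.choose, hw.choose_spec.1⟩ else 1

/-- `γ* = sup{γ + 1 : γ ∈ u_{s}}`. -/
noncomputable def gammaStar (s : x.I) : Ordinal.{0} :=
  sSup ((fun γ => γ + 1) '' x.u s)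

/-- Condition `⊛_{2,α}(s(*), t*)` of Claim 1.7(2): (i) `λ` is regular and `|u_s| < λ` for
all `s`; (ii) any `g ∈ 𝒢_𝔵` whose domain includes `u_s` yields a well-defined
`t(s, g↾u_s, h_g↾u_s)`; (iii) if `t₁, t₂` project into `S` and their `g`- and `h`-parts
have a common extension of the form `(g, h_g)` with `g ∈ 𝒢_𝔵`, then `(t₁,t₂) ∈ T`;
(iv) `t* = t(s(*), g₀, h₀)` with `g₀` constantly `0` and `h₀` constantly `γ*` on
`u_{s(*)}`. (The condition does not depend on the ordinal `α`.) -/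
def Star2 (sStar : x.I) (tStar : x.J) : Prop :=
  (x.lam.IsRegular ∧ ∀ s : x.I, Cardinal.mk ↥(x.u s) < Cardinal.lift.{1} x.lam) ∧
  (∀ (s : x.I) (G : x.GFun), (∀ γ ∈ x.u s, γ < G.beta) → x.wellDef s G.g G.h) ∧
  (∀ t₁ t₂ : x.J, (x.st t₁, x.st t₂) ∈ x.S →
    (∃ G : x.GFun,
      (∀ γ ∈ x.u (x.st t₁), γ < G.beta ∧ x.gt t₁ γ = G.g γ ∧ x.ht t₁ γ = G.h γ) ∧
      (∀ γ ∈ x.u (x.st t₂), γ < G.beta ∧ x.gt t₂ γ = G.g γ ∧ x.ht t₂ γ = G.h γ)) →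
    (t₁, t₂) ∈ x.T) ∧
  (x.st tStar = sStar ∧ (∀ γ ∈ x.u sStar, x.gt tStar γ = 0) ∧
    (∀ γ ∈ x.u sStar, x.ht tStar γ = x.gammaStar sStar))

end FullParam


/-!
ISO answers the `β`-th move of AIS by the graph of `f_c̄ : (s, y) ↦ (s, y · c_s)` on `M_{I_β}`,
where `I_β = {s : u_s ⊆ D_β}` and `D_β < λ` (regularity of `λ`) bounds `γ*(s)` for `s = s(*)`
and for every element `(s, y)` played so far. Right multiplication commutes with the left
multiplications `F_{s,a}`, so `f_c̄` is a partial isomorphism once `(c_{s₁}, c_{s₂}) ∈ 𝔾_{s₁,s₂}`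
for `(s₁, s₂) ∈ S`; it sends `(s(*), e)` to `(s(*), c_{s(*)})`.

We take `c_s = x_{t(s, g_β↾u_s, h_{g_β}↾u_s)}`, where `g_β(γ) = 0` for `γ < γ*(s(*))` and
otherwise `g_β(γ) = 1 + min {δ ≤ β : γ < D_δ}`. As `α ≥ ω`, `g_β ≤ 1 + β < α`, so `g_β ∈ 𝒢_𝔵`;
`⊛₂(iii)` then gives the pairing condition and `⊛₂(iv)` gives `c_{s(*)} = x_{t*}`. For `β' ≤ β`,
`g_β` agrees with `g_{β'}` below `D_{β'}` and exceeds all these values from `D_{β'}` on, so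
`h_{g_β}` agrees with `h_{g_{β'}}` below `D_{β'}`: the answers increase with `β`.
-/

theorem csInf_eq_csInf_of_forall_lt_iff {α : Type*} [ConditionallyCompleteLinearOrderBot α]
    [WellFoundedLT α] {s t : Set α} {a : α} (hs : a ∈ s) (ht : a ∈ t)
    (h : ∀ b < a, b ∈ s ↔ b ∈ t) : sInf s = sInf t := by
  suffices key : ∀ {s t : Set α}, a ∈ s → a ∈ t → (∀ b < a, b ∈ s ↔ b ∈ t) →
      sInf t ≤ sInf s from
    le_antisymm (key ht hs fun b hb => (h b hb).symm) (key hs ht h)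
  intro s t hs ht h
  rcases (csInf_le' hs).lt_or_eq with hlt | heq
  · exact csInf_le' ((h _ hlt).1 (csInf_mem ⟨a, hs⟩))
  · exact heq ▸ csInf_le' ht

namespace Cardinal

theorem IsRegular.sSup_lt_ord {c : Cardinal.{u}} (hc : c.IsRegular) {s : Set Ordinal.{u}}
    (hs : #s < Cardinal.lift.{u + 1} c) (h : ∀ o ∈ s, o < c.ord) : sSup s < c.ord :=
  Ordinal.sSup_lt_of_lt_cof (by rwa [← Ordinal.lift_cof, hc.cof_ord]) h

theorem IsRegular.sSup_add_one_lt_ord {c : Cardinal.{u}} (hc : c.IsRegular)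
    {s : Set Ordinal.{u}} (hs : #s < Cardinal.lift.{u + 1} c) (h : ∀ o ∈ s, o < c.ord) :
    sSup ((· + 1) '' s) < c.ord :=
  Ordinal.sSup_add_one_lt_of_lt_cof (by rwa [← Ordinal.lift_cof, hc.cof_ord]) h

theorem mk_union_lt_of_add_lt_one_add {α : Type u} {s t : Set α} {c : Cardinal.{u}}
    (hc : ℵ₀ ≤ c) (h : #s + #t < 1 + c) : #(s ∪ t : Set α) < c :=
  (mk_union_le s t).trans_lt (by rwa [add_comm 1, add_one_of_aleph0_le hc] at h)

end Cardinal

namespace EFGame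

open FirstOrder.Language Structure

variable {L : FirstOrder.Language.{0, 0}} {M N : Type} [L.Structure M] [L.Structure N]

theorem isPartialIso_graph {D : Set M} {f : M → N}
    (hD : ∀ {n} (F : L.Functions n) (v : Fin n → M), (∀ i, v i ∈ D) → funMap F v ∈ D)
    (hinj : Set.InjOn f D)
    (hfun : ∀ {n} (F : L.Functions n) (v : Fin n → M), (∀ i, v i ∈ D) →
      f (funMap F v) = funMap F (f ∘ v))
    (hrel : ∀ {n} (R : L.Relations n) (v : Fin n → M), (∀ i, v i ∈ D) →
      (RelMap R (f ∘ v) ↔ RelMap R v)) :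
    IsPartialIso L M N {p | p.1 ∈ D ∧ p.2 = f p.1} := by
  let S : L.Substructure M := ⟨D, fun F v hv => hD F v hv⟩
  let e : S ↪[L] N :=
    { toFun := fun m => f m
      inj' := fun m m' h => Subtype.ext (hinj m.2 m'.2 h)
      map_fun' := fun F v => hfun F (fun i => v i) fun i => (v i).2
      map_rel' := fun R v => hrel R (fun i => v i) fun i => (v i).2 }
  refine ⟨?_, fun n φ hφ xs hxs => ?_⟩
  · rintro ⟨m, _⟩ ⟨hm, h⟩ ⟨m', _⟩ ⟨hm', h'⟩
    simp only at hm hm' h h'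
    subst h h'
    exact ⟨congrArg f, fun h => hinj hm hm' h⟩
  · choose hmem hval using hxs
    let ys : Fin n → S := fun i => ⟨(xs i).1, hmem i⟩
    have h₁ : (fun i => (xs i).1) = S.subtype ∘ ys := rfl
    have h₂ : (fun i => (xs i).2) = e ∘ ys := funext hval
    have hv : ∀ {P : Type} (g : S → P), (fun e : Empty => e.elim) = g ∘ Empty.elim :=
      fun _ => funext fun e => e.elim
    rw [h₁, h₂, hv S.subtype, hv e, hφ.isQF.realize_embedding, hφ.isQF.realize_embedding]

theorem isPartialIso_graph_withConstant {D : Set M} {f : M → N} {c₁ : M} {c₂ : N}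
    (hc₁ : c₁ ∈ D) (hc : f c₁ = c₂)
    (hD : ∀ {n} (F : L.Functions n) (v : Fin n → M), (∀ i, v i ∈ D) → funMap F v ∈ D)
    (hinj : Set.InjOn f D)
    (hfun : ∀ {n} (F : L.Functions n) (v : Fin n → M), (∀ i, v i ∈ D) →
      f (funMap F v) = funMap F (f ∘ v))
    (hrel : ∀ {n} (R : L.Relations n) (v : Fin n → M), (∀ i, v i ∈ D) →
      (RelMap R (f ∘ v) ↔ RelMap R v)) :
    letI := constantsOn.structure (M := M) fun _ : Unit => c₁
    letI := constantsOn.structure (M := N) fun _ : Unit => c₂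
    IsPartialIso (L.sum (constantsOn Unit)) M N {p | p.1 ∈ D ∧ p.2 = f p.1} := by
  let := constantsOn.structure (M := M) fun _ : Unit => c₁
  let := constantsOn.structure (M := N) fun _ : Unit => c₂
  refine isPartialIso_graph ?_ hinj ?_ ?_
  · rintro (_ | _) (F | F) v hv
    exacts [hD F v hv, hc₁, hD F v hv, isEmptyElim F]
  · rintro (_ | _) (F | F) v hv
    exacts [hfun F v hv, hc, hfun F v hv, isEmptyElim F]
  · rintro n (R | R) v hv
    exacts [hrel R v hv, R.elim]

end EFGame

namespace FullParam

open Cardinal FirstOrder.Language Structure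

section StageFunctions

variable {D D' : Ordinal.{u} → Ordinal.{u}} {g g' : Ordinal.{u} → Ordinal.{u}}
  {γ₀ β β' γ γ₁ γ₂ δ ζ b b' : Ordinal.{u}}

/-- Only meaningful when `γ < D δ` for some `δ ≤ β`; otherwise it is `sInf ∅ = 0`. -/
noncomputable def entryStage (D : Ordinal.{u} → Ordinal.{u}) (β γ : Ordinal.{u}) :
    Ordinal.{u} :=
  sInf {δ | δ ≤ β ∧ γ < D δ}

theorem entryStage_le (hδ : δ ≤ β) (hγ : γ < D δ) : entryStage D β γ ≤ δ :=
  csInf_le' ⟨hδ, hγ⟩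

theorem entryStage_spec (hδ : δ ≤ β) (hγ : γ < D δ) :
    entryStage D β γ ≤ β ∧ γ < D (entryStage D β γ) :=
  csInf_mem (s := {δ | δ ≤ β ∧ γ < D δ}) ⟨δ, hδ, hγ⟩

theorem entryStage_congr (h : ∀ δ ≤ β, D δ = D' δ) : entryStage D β = entryStage D' β :=
  funext fun γ => congrArg sInf <| Set.ext fun δ => and_congr_right fun hδ => by rw [h δ hδ]

theorem entryStage_eq_of_le (hβ : β' ≤ β) (hγ : γ < D β') :
    entryStage D β' γ = entryStage D β γ := by
  obtain ⟨hle', hγ'⟩ := entryStage_spec le_rfl hγ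
  have hle : entryStage D β γ ≤ β' := entryStage_le hβ hγ
  exact le_antisymm (entryStage_le hle (entryStage_spec hβ hγ).2)
    (entryStage_le (hle'.trans hβ) hγ')

theorem entryStage_mono (h : γ₁ ≤ γ₂) (hγ₂ : γ₂ < D β) :
    entryStage D β γ₁ ≤ entryStage D β γ₂ := by
  obtain ⟨hle, hlt⟩ := entryStage_spec le_rfl hγ₂
  exact entryStage_le hle (h.trans_lt hlt)

theorem lt_entryStage (hD : Monotone D) (hζ : D β' ≤ ζ) (hζβ : ζ < D β) :
    β' < entryStage D β ζ := by
  by_contra! hle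
  exact ((entryStage_spec le_rfl hζβ).2.trans_le (hD hle)).not_ge hζ

noncomputable def stageFun (D : Ordinal.{u} → Ordinal.{u}) (γ₀ β γ : Ordinal.{u}) :
    Ordinal.{u} :=
  if γ < γ₀ then 0 else 1 + entryStage D β γ

theorem stageFun_of_lt (hγ : γ < γ₀) : stageFun D γ₀ β γ = 0 :=
  if_pos hγ

theorem stageFun_of_le (hγ : γ₀ ≤ γ) : stageFun D γ₀ β γ = 1 + entryStage D β γ :=
  if_neg hγ.not_gt

theorem stageFun_pos (hγ : γ₀ ≤ γ) : 0 < stageFun D γ₀ β γ := by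
  rw [stageFun_of_le hγ]
  exact zero_lt_one.trans_le le_self_add

theorem stageFun_le (hβ : β' ≤ β) (hγ : γ < D β') : stageFun D γ₀ β γ ≤ 1 + β' := by
  unfold stageFun
  split_ifs
  · exact zero_le
  · exact (add_le_add_iff_left 1).2 (entryStage_le hβ hγ)

theorem stageFun_mono (h : γ₁ ≤ γ₂) (hγ₂ : γ₂ < D β) :
    stageFun D γ₀ β γ₁ ≤ stageFun D γ₀ β γ₂ := by
  unfold stageFun
  split_ifs with h₁ h₂ h₂
  · exact le_rfl
  · exact zero_le
  · exact absurd (h.trans_lt h₂) h₁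
  · exact (add_le_add_iff_left 1).2 (entryStage_mono h hγ₂)

theorem stageFun_eq_of_le (hβ : β' ≤ β) (hγ : γ < D β') :
    stageFun D γ₀ β' γ = stageFun D γ₀ β γ := by
  unfold stageFun
  rw [entryStage_eq_of_le hβ hγ]

theorem stageFun_lt_of_le (hD : Monotone D) (h₀ : γ₀ ≤ D β') (hβ : β' ≤ β) (hγ : γ < D β')
    (hζ : D β' ≤ ζ) (hζβ : ζ < D β) : stageFun D γ₀ β γ < stageFun D γ₀ β ζ := by
  rw [stageFun_of_le (h₀.trans hζ)]
  exact (stageFun_le hβ hγ).trans_lt ((add_lt_add_iff_left 1).2 (lt_entryStage hD hζ hζβ))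

theorem stageFun_congr (h : ∀ δ ≤ β, D δ = D' δ) : stageFun D γ₀ β = stageFun D' γ₀ β := by
  unfold stageFun
  rw [entryStage_congr h]

/-- `GFun.h` of `g ↾ b`, for `(g, b)` not packaged as a `GFun`. -/
noncomputable def hFun (g : Ordinal.{u} → Ordinal.{u}) (b γ : Ordinal.{u}) : Ordinal.{u} :=
  sInf {β' | β' ≤ b ∧ (β' = b ∨ g γ < g β')}

theorem hFun_eq_of_le (hb : b' ≤ b) (hγ : γ < b') (hg : ∀ ζ < b', g' ζ = g ζ)
    (hsep : ∀ ζ, b' ≤ ζ → ζ < b → g γ < g ζ) : hFun g' b' γ = hFun g b γ := by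
  refine csInf_eq_csInf_of_forall_lt_iff ⟨le_rfl, Or.inl rfl⟩
    ⟨hb, hb.eq_or_lt.imp id (hsep b' le_rfl)⟩ fun ζ hζ => ?_
  have hζb : ζ < b := hζ.trans_le hb
  simp only [Set.mem_ofPred_eq, hζ.le, hζb.le, hζ.ne, hζb.ne, hg ζ hζ, hg γ hγ, true_and,
    false_or]

theorem hFun_eq_of_forall_lt (hγ : γ < γ₀) (hγ₀ : γ₀ ≤ b) (hlow : ∀ ζ < γ₀, g ζ = 0)
    (hpos : 0 < g γ₀) : hFun g b γ = γ₀ := by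
  refine IsLeast.csInf_eq ⟨⟨hγ₀, hγ₀.eq_or_lt.imp id fun _ => (hlow γ hγ).symm ▸ hpos⟩,
    fun ζ hζ => ?_⟩
  by_contra! hζγ₀
  rcases hζ.2 with rfl | hlt
  · exact hζγ₀.not_ge hγ₀
  · rw [hlow γ hγ, hlow ζ hζγ₀] at hlt
    exact hlt.false

theorem hFun_stageFun_eq_of_le (hD : Monotone D) (h₀ : γ₀ ≤ D β') (hβ : β' ≤ β)
    (hγ : γ < D β') :
    hFun (stageFun D γ₀ β') (D β') γ = hFun (stageFun D γ₀ β) (D β) γ :=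
  hFun_eq_of_le (hD hβ) hγ (fun _ hζ => stageFun_eq_of_le hβ hζ)
    fun _ hζ hζβ => stageFun_lt_of_le hD h₀ hβ hγ hζ hζβ

theorem hFun_stageFun_of_lt (h₀ : γ₀ ≤ D β) (hγ : γ < γ₀) :
    hFun (stageFun D γ₀ β) (D β) γ = γ₀ :=
  hFun_eq_of_forall_lt hγ h₀ (fun _ hζ => stageFun_of_lt hζ) (stageFun_pos le_rfl)

end StageFunctions

section Model

variable (x : FullParam) {I' : Set x.I} {c : ∀ s : x.I, x.G s}

theorem F_mk_self (s : x.I) (a y : x.G s) : x.F s a ⟨s, y⟩ = ⟨s, a * y⟩ :=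
  dif_pos rfl

theorem F_of_ne {s : x.I} (a : x.G s) {m : x.M} (h : m.1 ≠ s) : x.F s a m = m :=
  dif_neg h

theorem fst_F (s : x.I) (a : x.G s) (m : x.M) : (x.F s a m).1 = m.1 := by
  unfold F
  split_ifs with h
  exacts [h.symm, rfl]

theorem fst_fc (m : x.M) : (x.fc I' c m).1 = m.1 := by
  unfold fc
  split_ifs <;> rfl

theorem fc_mk {s : x.I} (hs : s ∈ I') (y : x.G s) : x.fc I' c ⟨s, y⟩ = ⟨s, y * c s⟩ :=
  if_pos hs

theorem injOn_fc : Set.InjOn (x.fc I' c) {m | m.1 ∈ I'} := by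
  rintro ⟨s, y⟩ (hs : s ∈ I') ⟨s', y'⟩ (hs' : s' ∈ I') h
  rw [fc_mk x hs, fc_mk x hs'] at h
  obtain ⟨rfl, h⟩ := Sigma.mk.inj_iff.mp h
  rw [mul_right_cancel (eq_of_heq h)]

theorem fc_F (s : x.I) (a : x.G s) {m : x.M} (hm : m.1 ∈ I') :
    x.fc I' c (x.F s a m) = x.F s a (x.fc I' c m) := by
  obtain ⟨s₀, y⟩ := m
  by_cases h : s₀ = s
  · subst h
    rw [F_mk_self, fc_mk x hm, fc_mk x hm, F_mk_self, mul_assoc]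
  · rw [F_of_ne x a h, F_of_ne x a (by rwa [fst_fc])]

theorem fc_mem_Q_iff (hc : x.inC I' c) {m₁ m₂ : x.M} (h₁ : m₁.1 ∈ I') (h₂ : m₂.1 ∈ I') :
    (x.fc I' c m₁, x.fc I' c m₂) ∈ x.Q ↔ (m₁, m₂) ∈ x.Q := by
  obtain ⟨s₁, y₁⟩ := m₁
  obtain ⟨s₂, y₂⟩ := m₂
  rw [fc_mk x h₁, fc_mk x h₂]
  exact and_congr_right fun hS => mul_mem_cancel_right (y := (y₁, y₂)) (hc s₁ s₂ h₁ h₂ hS)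

/-- The structure `EFGame.EFEquivC` puts on `(M_𝔵, m)`. -/
noncomputable abbrev withConst (m : x.M) : (x.lang.sum (constantsOn Unit)).Structure x.M :=
  @sumStructure _ _ _ x.strM (constantsOn.structure fun _ => m)

def fcGraph (I' : Set x.I) (c : ∀ s : x.I, x.G s) : Set (x.M × x.M) :=
  {p | p.1.1 ∈ I' ∧ p.2 = x.fc I' c p.1}

theorem isPartialIso_fcGraph (hc : x.inC I' c) {s₀ : x.I} (hs₀ : s₀ ∈ I') {y y' : x.G s₀}
    (hy : y * c s₀ = y') :
    @EFGame.IsPartialIso _ x.M x.M (x.withConst ⟨s₀, y⟩) (x.withConst ⟨s₀, y'⟩)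
      (x.fcGraph I' c) := by
  refine EFGame.isPartialIso_graph_withConstant (D := {m : x.M | m.1 ∈ I'}) hs₀
    (by rw [fc_mk x hs₀, hy]) ?_ x.injOn_fc ?_ ?_
  · rintro (_ | _ | _) F v hv
    · exact Empty.elim F
    · show (x.F F.1 F.2 (v 0)).1 ∈ I'
      exact x.fst_F F.1 F.2 (v 0) ▸ hv 0
    · exact Empty.elim F
  · rintro (_ | _ | _) F v hv
    · exact Empty.elim F
    · exact x.fc_F F.1 F.2 (hv 0)
    · exact Empty.elim F
  · rintro (_ | _ | _ | _) R v hv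
    · exact Empty.elim R
    · show (x.fc I' c (v 0)).1 = R ↔ (v 0).1 = R
      rw [fst_fc]
    · show (x.fc I' c (v 0)).1 = R.1.1 ∧ (x.fc I' c (v 1)).1 = R.1.2 ∧
          (x.fc I' c (v 0), x.fc I' c (v 1)) ∈ x.Q ↔
        (v 0).1 = R.1.1 ∧ (v 1).1 = R.1.2 ∧ (v 0, v 1) ∈ x.Q
      rw [fst_fc, fst_fc, x.fc_mem_Q_iff hc (hv 0) (hv 1)]
    · exact Empty.elim R

theorem fcGraph_mono {I'' : Set x.I} {c' : ∀ s : x.I, x.G s} (hI : I' ⊆ I'')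
    (hc : ∀ s ∈ I', c s = c' s) : x.fcGraph I' c ⊆ x.fcGraph I'' c' := by
  rintro ⟨⟨s, y⟩, m'⟩ ⟨hs, h⟩
  exact ⟨hI hs, h.trans (by rw [fc_mk x hs, fc_mk x (hI hs), hc s hs])⟩

theorem mem_fst_image_fcGraph {m : x.M} (hm : m.1 ∈ I') : m ∈ Prod.fst '' x.fcGraph I' c :=
  ⟨(m, x.fc I' c m), ⟨hm, rfl⟩, rfl⟩

theorem mem_snd_image_fcGraph {m : x.M} (hm : m.1 ∈ I') : m ∈ Prod.snd '' x.fcGraph I' c :=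
  ⟨(⟨m.1, m.2 * (c m.1)⁻¹⟩, m), ⟨hm, by rw [fc_mk x hm, inv_mul_cancel_right]⟩, rfl⟩

theorem lt_gammaStar {s : x.I} {γ : Ordinal.{0}} (hγ : γ ∈ x.u s) : γ < x.gammaStar s :=
  (Order.lt_succ γ).trans_le <| le_csSup
    ⟨x.lam.ord, by rintro _ ⟨γ', hγ', rfl⟩; exact Order.succ_le_of_lt (x.u_lt s γ' hγ')⟩
    ⟨γ, hγ, rfl⟩

theorem gammaStar_lt_ord (hreg : x.lam.IsRegular) {s : x.I} (hs : #(x.u s) < lift.{1} x.lam) :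
    x.gammaStar s < x.lam.ord :=
  hreg.sSup_add_one_lt_ord hs (x.u_lt s)

open Classical in
/-- `cg G = genAt · G.g G.h`, for pairs `(g, h)` not coming from a `GFun`. -/
noncomputable def genAt (s : x.I) (g h : Ordinal.{0} → Ordinal.{0}) : x.G s :=
  if hw : x.wellDef s g h then FreeGroup.of ⟨hw.choose, hw.choose_spec.1⟩ else 1

variable {x}

theorem genAt_eq {s : x.I} {g h : Ordinal.{0} → Ordinal.{0}} {t : x.J} (hst : x.st t = s)
    (hg : ∀ γ ∈ x.u s, x.gt t γ = g γ) (hh : ∀ γ ∈ x.u s, x.ht t γ = h γ) :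
    x.genAt s g h = FreeGroup.of ⟨t, hst⟩ := by
  have hw : x.wellDef s g h := ⟨t, hst, hg, hh⟩
  obtain ⟨hst', hg', hh'⟩ := hw.choose_spec
  rw [genAt, dif_pos hw]
  subst hst
  congr 2
  refine x.uniq _ _ hst' (fun γ hγ => ?_) fun γ hγ => ?_
  · rw [hst'] at hγ
    rw [hg' γ hγ, hg γ hγ]
  · rw [hst'] at hγ
    rw [hh' γ hγ, hh γ hγ]

theorem genAt_congr {s : x.I} {g h g' h' : Ordinal.{0} → Ordinal.{0}} (hw : x.wellDef s g h)
    (hg : ∀ γ ∈ x.u s, g γ = g' γ) (hh : ∀ γ ∈ x.u s, h γ = h' γ) :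
    x.genAt s g h = x.genAt s g' h' := by
  obtain ⟨t, hst, hgt, hht⟩ := hw
  rw [genAt_eq hst hgt hht, genAt_eq hst (fun γ hγ => (hgt γ hγ).trans (hg γ hγ))
    (fun γ hγ => (hht γ hγ).trans (hh γ hγ))]

theorem inC_cg
    (hWD : ∀ (s : x.I) (G : x.GFun), (∀ γ ∈ x.u s, γ < G.beta) → x.wellDef s G.g G.h)
    (hT : ∀ t₁ t₂ : x.J, (x.st t₁, x.st t₂) ∈ x.S →
      (∃ G : x.GFun,
        (∀ γ ∈ x.u (x.st t₁), γ < G.beta ∧ x.gt t₁ γ = G.g γ ∧ x.ht t₁ γ = G.h γ) ∧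
        (∀ γ ∈ x.u (x.st t₂), γ < G.beta ∧ x.gt t₂ γ = G.g γ ∧ x.ht t₂ γ = G.h γ)) →
      (t₁, t₂) ∈ x.T)
    (G : x.GFun) : x.inC {s | ∀ γ ∈ x.u s, γ < G.beta} (x.cg G) := by
  intro s₁ s₂ hs₁ hs₂ hS
  obtain ⟨t₁, rfl, hg₁, hh₁⟩ := hWD s₁ G hs₁
  obtain ⟨t₂, rfl, hg₂, hh₂⟩ := hWD _ G hs₂
  show (x.genAt _ G.g G.h, x.genAt _ G.g G.h) ∈ _
  rw [genAt_eq rfl hg₁ hh₁, genAt_eq rfl hg₂ hh₂]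
  exact Subgroup.subset_closure ⟨t₁, t₂, rfl, rfl, hT t₁ t₂ hS
    ⟨G, fun γ hγ => ⟨hs₁ γ hγ, hg₁ γ hγ, hh₁ γ hγ⟩, fun γ hγ => ⟨hs₂ γ hγ, hg₂ γ hγ, hh₂ γ hγ⟩⟩,
    rfl⟩

end Model

section Strategy

variable (x : FullParam) (sStar : x.I) (A : Ordinal.{0} → Set x.M × Set x.M)

noncomputable def moveBound (γ : Ordinal.{0}) : Ordinal.{0} :=
  sSup ((fun m : x.M => x.gammaStar m.1) '' ((A γ).1 ∪ (A γ).2))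

noncomputable def stageBound (β : Ordinal.{0}) : Ordinal.{0} :=
  x.gammaStar sStar ⊔ sSup (x.moveBound A '' Set.Iic β)

def indicesBelow (b : Ordinal.{0}) : Set x.I :=
  {s | ∀ γ ∈ x.u s, γ < b}

noncomputable def stageGen (β : Ordinal.{0}) (s : x.I) : x.G s :=
  x.genAt s (stageFun (x.stageBound sStar A) (x.gammaStar sStar) β)
    (hFun (stageFun (x.stageBound sStar A) (x.gammaStar sStar) β) (x.stageBound sStar A β))

def response (β : Ordinal.{0}) : Set (x.M × x.M) :=
  x.fcGraph (x.indicesBelow (x.stageBound sStar A β)) (x.stageGen sStar A β)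

theorem monotone_stageBound : Monotone (x.stageBound sStar A) := fun _ _ h =>
  sup_le_sup_left (csSup_le_csSup' Ordinal.bddAbove_of_small
    (Set.image_mono (Set.Iic_subset_Iic.mpr h))) _

theorem gammaStar_le_stageBound (β : Ordinal.{0}) :
    x.gammaStar sStar ≤ x.stageBound sStar A β :=
  le_sup_left

theorem sStar_mem_indicesBelow (β : Ordinal.{0}) :
    sStar ∈ x.indicesBelow (x.stageBound sStar A β) := fun _ hγ =>
  (x.lt_gammaStar hγ).trans_le (x.gammaStar_le_stageBound sStar A β)

theorem mem_indicesBelow_stageBound {β : Ordinal.{0}} {m : x.M}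
    (hm : m ∈ (A β).1 ∪ (A β).2) : m.1 ∈ x.indicesBelow (x.stageBound sStar A β) := fun _ hγ =>
  calc _ < x.gammaStar m.1 := x.lt_gammaStar hγ
    _ ≤ x.moveBound A β := le_csSup Ordinal.bddAbove_of_small ⟨m, hm, rfl⟩
    _ ≤ x.stageBound sStar A β :=
      le_sup_of_le_right (le_csSup Ordinal.bddAbove_of_small ⟨β, Set.self_mem_Iic, rfl⟩)

variable {x A}

theorem moveBound_lt_ord (hreg : x.lam.IsRegular) (hu : ∀ s : x.I, #(x.u s) < lift.{1} x.lam)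
    {γ : Ordinal.{0}} (hA : #((A γ).1 ∪ (A γ).2 : Set x.M) < x.lam) :
    x.moveBound A γ < x.lam.ord := by
  refine hreg.sSup_lt_ord ?_ ?_
  · rw [← lift_uzero #(_ '' _)]
    exact mk_image_le_lift.trans_lt (lift_lt.mpr hA)
  · rintro _ ⟨m, -, rfl⟩
    exact x.gammaStar_lt_ord hreg (hu m.1)

theorem stageBound_lt_ord (hreg : x.lam.IsRegular) (hu : ∀ s : x.I, #(x.u s) < lift.{1} x.lam)
    {β : Ordinal.{0}} (hβ : β < x.lam.ord)
    (hA : ∀ γ ≤ β, #((A γ).1 ∪ (A γ).2 : Set x.M) < x.lam) :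
    x.stageBound sStar A β < x.lam.ord := by
  refine max_lt (x.gammaStar_lt_ord hreg (hu sStar))
    (hreg.sSup_lt_ord (mk_image_le.trans_lt ?_) ?_)
  · rw [← Order.Iio_succ, mk_Iio_ordinal, lift_lt, ← lt_ord]
    exact (isSuccLimit_ord hreg.aleph0_le).succ_lt hβ
  · rintro _ ⟨γ, hγ, rfl⟩
    exact moveBound_lt_ord hreg hu (hA γ hγ)

theorem response_congr {A' : Ordinal.{0} → Set x.M × Set x.M} {β : Ordinal.{0}}
    (h : ∀ γ ≤ β, A γ = A' γ) : x.response sStar A β = x.response sStar A' β := by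
  have hD : ∀ δ ≤ β, x.stageBound sStar A δ = x.stageBound sStar A' δ := fun δ hδ => by
    unfold stageBound moveBound
    congr 2
    exact Set.image_congr fun γ hγ => by rw [h γ (le_trans hγ hδ)]
  unfold response stageGen
  rw [stageFun_congr hD, hD β le_rfl]

variable {α β : Ordinal.{0}}

noncomputable def stageGFun (hα : α < x.alphaStar) (hω : Ordinal.omega0 ≤ α) (hβ : β < α)
    (hD : x.stageBound sStar A β < x.lam.ord) : x.GFun where
  alpha := α
  beta := x.stageBound sStar A β
  alpha_lt := hα
  beta_lt := hD
  g := stageFun (x.stageBound sStar A) (x.gammaStar sStar) β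
  g_lt _ hγ := (stageFun_le le_rfl hγ).trans_lt <| by
    rwa [← Ordinal.one_add_of_omega0_le hω, add_lt_add_iff_left]
  g_mono _ _ h hγ := stageFun_mono h hγ

theorem stageGen_eq_of_le {β' : Ordinal.{0}} {s : x.I}
    (hw : x.wellDef s (stageFun (x.stageBound sStar A) (x.gammaStar sStar) β')
      (hFun (stageFun (x.stageBound sStar A) (x.gammaStar sStar) β') (x.stageBound sStar A β')))
    (hβ : β' ≤ β) (hs : s ∈ x.indicesBelow (x.stageBound sStar A β')) :
    x.stageGen sStar A β' s = x.stageGen sStar A β s :=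
  genAt_congr hw (fun γ hγ => stageFun_eq_of_le hβ (hs γ hγ)) fun γ hγ =>
    hFun_stageFun_eq_of_le (x.monotone_stageBound sStar A)
      (x.gammaStar_le_stageBound sStar A β') hβ (hs γ hγ)

theorem stageGen_sStar {tStar : x.J} (hts : x.st tStar = sStar)
    (hgt0 : ∀ γ ∈ x.u sStar, x.gt tStar γ = 0)
    (hht0 : ∀ γ ∈ x.u sStar, x.ht tStar γ = x.gammaStar sStar) :
    x.stageGen sStar A β sStar = FreeGroup.of ⟨tStar, hts⟩ :=
  genAt_eq hts (fun γ hγ => (hgt0 γ hγ).trans (stageFun_of_lt (x.lt_gammaStar hγ)).symm)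
    fun γ hγ => (hht0 γ hγ).trans
      (hFun_stageFun_of_lt (x.gammaStar_le_stageBound sStar A β) (x.lt_gammaStar hγ)).symm

theorem response_mono
    (hWD : ∀ (s : x.I) (G : x.GFun), (∀ γ ∈ x.u s, γ < G.beta) → x.wellDef s G.g G.h)
    (hα : α < x.alphaStar) (hω : Ordinal.omega0 ≤ α) (hβ : β < α)
    (hD : x.stageBound sStar A β < x.lam.ord) {β' : Ordinal.{0}} (hβ' : β' ≤ β) :
    x.response sStar A β' ⊆ x.response sStar A β := by
  have hD' := (x.monotone_stageBound sStar A hβ').trans_lt hD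
  refine x.fcGraph_mono
    (fun s hs γ hγ => (hs γ hγ).trans_le (x.monotone_stageBound sStar A hβ'))
    fun s hs => stageGen_eq_of_le sStar ?_ hβ' hs
  exact hWD s (stageGFun sStar hα hω (hβ'.trans_lt hβ) hD') hs

theorem isPartialIso_response
    (hWD : ∀ (s : x.I) (G : x.GFun), (∀ γ ∈ x.u s, γ < G.beta) → x.wellDef s G.g G.h)
    (hT : ∀ t₁ t₂ : x.J, (x.st t₁, x.st t₂) ∈ x.S →
      (∃ G : x.GFun,
        (∀ γ ∈ x.u (x.st t₁), γ < G.beta ∧ x.gt t₁ γ = G.g γ ∧ x.ht t₁ γ = G.h γ) ∧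
        (∀ γ ∈ x.u (x.st t₂), γ < G.beta ∧ x.gt t₂ γ = G.g γ ∧ x.ht t₂ γ = G.h γ)) →
      (t₁, t₂) ∈ x.T)
    {tStar : x.J} (hts : x.st tStar = sStar)
    (hgt0 : ∀ γ ∈ x.u sStar, x.gt tStar γ = 0)
    (hht0 : ∀ γ ∈ x.u sStar, x.ht tStar γ = x.gammaStar sStar)
    (hα : α < x.alphaStar) (hω : Ordinal.omega0 ≤ α) (hβ : β < α)
    (hD : x.stageBound sStar A β < x.lam.ord) :
    @EFGame.IsPartialIso _ x.M x.M (x.withConst ⟨sStar, 1⟩)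
      (x.withConst ⟨sStar, FreeGroup.of ⟨tStar, hts⟩⟩) (x.response sStar A β) :=
  x.isPartialIso_fcGraph (inC_cg hWD hT (stageGFun sStar hα hω hβ hD))
    (x.sStar_mem_indicesBelow sStar A β)
    ((one_mul _).trans (stageGen_sStar sStar hts hgt0 hht0))

end Strategy

end FullParam

/-- Claim 1.7(2): if `𝔵` is a full `λ`-parameter, `s(*) ∈ I_𝔵`, `t* ∈ J_{s(*)}`,
`ω ≤ α < α*_𝔵` and condition `⊛_{2,α}(s(*), t*)` holds, then the expansions
`(M_𝔵, (s(*), e))` and `(M_𝔵, (s(*), x_{t*}))` are `EF_{α,λ}`-equivalent. -/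
theorem statement8 (x : FullParam) (sStar : x.I) (tStar : x.J) (hts : x.st tStar = sStar)
    (α : Ordinal.{0}) (hω : Ordinal.omega0 ≤ α) (hα : α < x.alphaStar)
    (hstar : x.Star2 sStar tStar) :
    EFGame.EFEquivC x.lang x.M x.M
      ⟨sStar, (1 : x.G sStar)⟩ ⟨sStar, FreeGroup.of ⟨tStar, hts⟩⟩ α x.lam := by
  obtain ⟨⟨hreg, hucard⟩, hWD, hT, -, hgt0, hht0⟩ := hstar
  refine ⟨fun β A => x.response sStar A β, fun β A A' hA => x.response_congr sStar hA,
    fun A hA β hβ => ?_⟩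
  have hsmall (γ) (hγ : γ ≤ β) := Cardinal.mk_union_lt_of_add_lt_one_add hreg.aleph0_le
    (hA γ (hγ.trans_lt hβ))
  have hD := x.stageBound_lt_ord sStar hreg hucard (hβ.trans (hα.trans_le x.alphaStar_le)) hsmall
  exact ⟨x.isPartialIso_response sStar hWD hT hts hgt0 hht0 hα hω hβ hD, Set.empty_subset _,
    fun γ hγ => x.response_mono sStar hWD hα hω hβ hD hγ.le,
    fun m hm => x.mem_fst_image_fcGraph (x.mem_indicesBelow_stageBound sStar A (Or.inl hm)),
    fun m hm => x.mem_snd_image_fcGraph (x.mem_indicesBelow_stageBound sStar A (Or.inr hm))⟩
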